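/- Let n ≥ 2 and 1 ≤ k ≤ n. If I is a coconsistent subset of the k-element subsets of [n] (copackets taken with respect to [n]), then the deletion I\n is a coconsistent subset of the k-element subsets of [n−1] (copackets taken with respect to [n−1]), and the contraction I/n is a coconsistent subset of the (k−1)-element subsets of [n−1] (copackets taken with respect to [n−1]). -/
import Mathlib


open Finset

/-- The `k`-element subsets of `[n] = {1, …, n}`. -/
def ksubsets (n k : ℕ) : Finset (Finset ℕ) := (Finset.Icc 1 n).powersetCard k

/-- The packet of `X`: all subsets of `X` with one element removed. -/
def packet (X : Finset ℕ) : Finset (Finset ℕ) := X.image (fun x => X.erase x)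

/-- The copacket of `X` with respect to `[n]`: all sets `X ∪ {i}` for `i ∈ [n] \ X`. -/
def copacket (n : ℕ) (X : Finset ℕ) : Finset (Finset ℕ) :=
  ((Finset.Icc 1 n) \ X).image (fun i => insert i X)

/-- The lexicographic order on finite sets of naturals viewed as increasing lists:
`X < Y` iff there is `m ∈ X \ Y` below which `X` and `Y` agree. -/
def lexLt (X Y : Finset ℕ) : Prop :=
  ∃ m ∈ X, m ∉ Y ∧ ∀ a < m, (a ∈ X ↔ a ∈ Y)

/-- `r` is a strict linear order on the collection `D`. -/
def IsStrictOrdOn (D : Finset (Finset ℕ)) (r : Finset ℕ → Finset ℕ → Prop) : Prop :=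
  (∀ X ∈ D, ¬ r X X) ∧
  (∀ X ∈ D, ∀ Y ∈ D, ∀ Z ∈ D, r X Y → r Y Z → r X Z) ∧
  (∀ X ∈ D, ∀ Y ∈ D, X ≠ Y → r X Y ∨ r Y X)

/-- The restriction of `r` to `P` is the lex order. -/
def RestrLex (r : Finset ℕ → Finset ℕ → Prop) (P : Finset (Finset ℕ)) : Prop :=
  ∀ A ∈ P, ∀ B ∈ P, (r A B ↔ lexLt A B)

/-- The restriction of `r` to `P` is the antilex order. -/
def RestrAntilex (r : Finset ℕ → Finset ℕ → Prop) (P : Finset (Finset ℕ)) : Prop :=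
  ∀ A ∈ P, ∀ B ∈ P, (r A B ↔ lexLt B A)

/-- `r` is an admissible order on the `k`-element subsets of `[n]`. -/
def Admissible (n k : ℕ) (r : Finset ℕ → Finset ℕ → Prop) : Prop :=
  IsStrictOrdOn (ksubsets n k) r ∧
  ∀ X ∈ ksubsets n (k+1), RestrLex r (packet X) ∨ RestrAntilex r (packet X)

/-- `r` is a coadmissible order on the `k`-element subsets of `[n]`. -/
def Coadmissible (n k : ℕ) (r : Finset ℕ → Finset ℕ → Prop) : Prop :=
  IsStrictOrdOn (ksubsets n k) r ∧
  ∀ X ∈ ksubsets n (k-1), RestrLex r (copacket n X) ∨ RestrAntilex r (copacket n X)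

open scoped Classical in
/-- The reversal set of an order on the `k`-element subsets of `[n]`:
the `(k+1)`-element subsets whose packet is restricted to the antilex order. -/
noncomputable def Rev (n k : ℕ) (r : Finset ℕ → Finset ℕ → Prop) : Finset (Finset ℕ) :=
  (ksubsets n (k+1)).filter (fun X => RestrAntilex r (packet X))

open scoped Classical in
/-- The coreversal set of an order on the `k`-element subsets of `[n]`:
the `(k-1)`-element subsets whose copacket is restricted to the antilex order. -/
noncomputable def Corev (n k : ℕ) (r : Finset ℕ → Finset ℕ → Prop) : Finset (Finset ℕ) :=
  (ksubsets n (k-1)).filter (fun X => RestrAntilex r (copacket n X))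

/-- `P ∩ I` is a prefix (lower set) of `P` in lex order. -/
def IsLexPrefix (P I : Finset (Finset ℕ)) : Prop :=
  ∀ A ∈ P, ∀ B ∈ P, B ∈ I → lexLt A B → A ∈ I

/-- `P ∩ I` is a suffix (upper set) of `P` in lex order. -/
def IsLexSuffix (P I : Finset (Finset ℕ)) : Prop :=
  ∀ A ∈ P, ∀ B ∈ P, A ∈ I → lexLt A B → B ∈ I

/-- `I` is a consistent subset of the `k`-element subsets of `[n]`. -/
def Consistent (n k : ℕ) (I : Finset (Finset ℕ)) : Prop :=
  I ⊆ ksubsets n k ∧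
  ∀ X ∈ ksubsets n (k+1), IsLexPrefix (packet X) I ∨ IsLexSuffix (packet X) I

/-- `I` is a coconsistent subset of the `k`-element subsets of `[n]`. -/
def CoConsistent (n k : ℕ) (I : Finset (Finset ℕ)) : Prop :=
  I ⊆ ksubsets n k ∧
  ∀ X ∈ ksubsets n (k-1), IsLexPrefix (copacket n X) I ∨ IsLexSuffix (copacket n X) I

/-- Deletion `I \ n` of a set of subsets. -/
def del (I : Finset (Finset ℕ)) (n : ℕ) : Finset (Finset ℕ) := I.filter (fun X => n ∉ X)

/-- Contraction `I / n` of a set of subsets. -/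
def contr (I : Finset (Finset ℕ)) (n : ℕ) : Finset (Finset ℕ) :=
  (I.filter (fun X => n ∈ X)).image (fun X => X.erase n)

/-- Contraction `ρ / n` of a linear order: `X < Y` iff `X ∪ {n} < Y ∪ {n}` in `ρ`. -/
def contrOrd (r : Finset ℕ → Finset ℕ → Prop) (n : ℕ) : Finset ℕ → Finset ℕ → Prop :=
  fun X Y => r (insert n X) (insert n Y)

/-- The Gale order: componentwise comparison of the increasing enumerations. -/
def galeLe (A B : Finset ℕ) : Prop :=
  List.Forall₂ (· ≤ ·) (A.sort (· ≤ ·)) (B.sort (· ≤ ·))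

/-- The consistent poset relation `≺_I` on the `(k-1)`-element subsets of `[n]`:
within the packet of `X ∈ I` the antilex order, and within the packet of
`X ∉ I` the lex order, transitively closed. -/
def cpRel (n k : ℕ) (I : Finset (Finset ℕ)) : Finset ℕ → Finset ℕ → Prop :=
  Relation.TransGen (fun A B =>
    ∃ X ∈ ksubsets n k, A ∈ packet X ∧ B ∈ packet X ∧
      ((X ∈ I ∧ lexLt B A) ∨ (X ∉ I ∧ lexLt A B)))

/-- A single-step-inclusion cover within the collection `C`. -/
def SSIStep (C : Finset (Finset ℕ) → Prop) (A B : Finset (Finset ℕ)) : Prop :=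
  C A ∧ C B ∧ ∃ Y, Y ∉ A ∧ B = insert Y A

/-- The single step inclusion order on the collection `C`. -/
def SSILe (C : Finset (Finset ℕ) → Prop) : Finset (Finset ℕ) → Finset (Finset ℕ) → Prop :=
  Relation.ReflTransGen (SSIStep C)


lemma mem_ksubsets' {n k : ℕ} {X : Finset ℕ} :
    X ∈ ksubsets n k ↔ X ⊆ Finset.Icc 1 n ∧ X.card = k := by
  simp [ksubsets, Finset.mem_powersetCard]

lemma mem_copacket' {n : ℕ} {X A : Finset ℕ} :
    A ∈ copacket n X ↔ ∃ i, (1 ≤ i ∧ i ≤ n) ∧ i ∉ X ∧ A = insert i X := by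
  constructor
  · intro h
    obtain ⟨i, hi, rfl⟩ := Finset.mem_image.mp h
    rw [Finset.mem_sdiff, Finset.mem_Icc] at hi
    exact ⟨i, hi.1, hi.2, rfl⟩
  · rintro ⟨i, hi1, hi2, rfl⟩
    exact Finset.mem_image.mpr ⟨i, Finset.mem_sdiff.mpr ⟨Finset.mem_Icc.mpr hi1, hi2⟩, rfl⟩

lemma lexLt_insert_iff' {c : ℕ} {A B : Finset ℕ} (hA : c ∉ A) (hB : c ∉ B) :
    lexLt (insert c A) (insert c B) ↔ lexLt A B := by
  constructor
  · rintro ⟨m, hmA, hmB, h⟩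
    have hmc : m ≠ c := fun e => hmB (e ▸ Finset.mem_insert_self c B)
    refine ⟨m, (Finset.mem_insert.mp hmA).resolve_left hmc,
      fun h' => hmB (Finset.mem_insert_of_mem h'), fun a ha => ?_⟩
    rcases eq_or_ne a c with rfl | hac
    · simp [hA, hB]
    · have := h a ha
      simpa [Finset.mem_insert, hac] using this
  · rintro ⟨m, hmA, hmB, h⟩
    have hmc : m ≠ c := fun e => hA (e ▸ hmA)
    refine ⟨m, Finset.mem_insert_of_mem hmA, ?_, fun a ha => ?_⟩
    · simp [Finset.mem_insert, hmc, hmB]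
    · rcases eq_or_ne a c with rfl | hac
      · simp
      · simp [Finset.mem_insert, hac, h a ha]

lemma notMem_of_copacket_pred {n : ℕ} {X A : Finset ℕ} (hn : 1 ≤ n)
    (hX : X ⊆ Finset.Icc 1 (n-1)) (hA : A ∈ copacket (n-1) X) : n ∉ A := by
  obtain ⟨i, ⟨hi1, hi2⟩, hiX, rfl⟩ := mem_copacket'.mp hA
  intro hmem
  rcases Finset.mem_insert.mp hmem with rfl | h
  · omega
  · have := Finset.mem_Icc.mp (hX h); omega

lemma copacket_pred_subset {n : ℕ} {X : Finset ℕ} :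
    copacket (n-1) X ⊆ copacket n X := by
  intro A hA
  obtain ⟨i, ⟨hi1, hi2⟩, hiX, rfl⟩ := mem_copacket'.mp hA
  exact mem_copacket'.mpr ⟨i, ⟨hi1, by omega⟩, hiX, rfl⟩

/-- If `I` is a coconsistent subset of the `k`-element subsets of `[n]`
(`n ≥ 2`, `1 ≤ k ≤ n`), then `I \ n` is a coconsistent subset of the `k`-element
subsets of `[n-1]` and `I / n` is a coconsistent subset of the `(k-1)`-element
subsets of `[n-1]` (copackets taken with respect to `[n-1]`). -/
theorem coconsistent_deletion_contraction (n k : ℕ) (hn : 2 ≤ n) (hk : 1 ≤ k) (hkn : k ≤ n)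
    (I : Finset (Finset ℕ)) (hI : CoConsistent n k I) :
    CoConsistent (n - 1) k (del I n) ∧ CoConsistent (n - 1) (k - 1) (contr I n) := by
  obtain ⟨hIsub, hIcc⟩ := hI
  have hn1 : 1 ≤ n := by omega
  constructor
  · -- deletion
    constructor
    · intro X hX
      rw [del, Finset.mem_filter] at hX
      obtain ⟨hXI, hXn⟩ := hX
      obtain ⟨hXsub, hXcard⟩ := mem_ksubsets'.mp (hIsub hXI)
      refine mem_ksubsets'.mpr ⟨fun x hx => ?_, hXcard⟩
      have := Finset.mem_Icc.mp (hXsub hx)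
      have : x ≠ n := fun e => hXn (e ▸ hx)
      rw [Finset.mem_Icc]
      have := Finset.mem_Icc.mp (hXsub hx)
      omega
    · intro X hX
      obtain ⟨hXsub, hXcard⟩ := mem_ksubsets'.mp hX
      have hXn : X ∈ ksubsets n (k-1) := by
        refine mem_ksubsets'.mpr ⟨fun x hx => ?_, hXcard⟩
        have := Finset.mem_Icc.mp (hXsub hx)
        rw [Finset.mem_Icc]; omega
      have hnotmem : ∀ A ∈ copacket (n-1) X, n ∉ A :=
        fun A hA => notMem_of_copacket_pred hn1 hXsub hA
      rcases hIcc X hXn with hpre | hsuf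
      · left
        intro A hA B hB hBI hlt
        rw [del, Finset.mem_filter] at hBI ⊢
        exact ⟨hpre A (copacket_pred_subset hA) B (copacket_pred_subset hB) hBI.1 hlt,
          hnotmem A hA⟩
      · right
        intro A hA B hB hAI hlt
        rw [del, Finset.mem_filter] at hAI ⊢
        exact ⟨hsuf A (copacket_pred_subset hA) B (copacket_pred_subset hB) hAI.1 hlt,
          hnotmem B hB⟩
  · -- contraction
    constructor
    · intro A hA
      rw [contr, Finset.mem_image] at hA
      obtain ⟨Z, hZ, rfl⟩ := hA
      rw [Finset.mem_filter] at hZ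
      obtain ⟨hZsub, hZcard⟩ := mem_ksubsets'.mp (hIsub hZ.1)
      refine mem_ksubsets'.mpr ⟨fun x hx => ?_, by
        rw [Finset.card_erase_of_mem hZ.2, hZcard]⟩
      have hxZ := Finset.mem_of_mem_erase hx
      have hxn := Finset.ne_of_mem_erase hx
      have := Finset.mem_Icc.mp (hZsub hxZ)
      rw [Finset.mem_Icc]; omega
    · intro Y hY
      obtain ⟨hYsub, hYcard⟩ := mem_ksubsets'.mp hY
      rcases eq_or_lt_of_le hk with hk1 | hk2
      · -- k = 1 : vacuous
        left
        intro A hA B hB hBI hlt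
        exfalso
        rw [contr, Finset.mem_image] at hBI
        obtain ⟨Z, hZ, rfl⟩ := hBI
        rw [Finset.mem_filter] at hZ
        obtain ⟨hZsub, hZcard⟩ := mem_ksubsets'.mp (hIsub hZ.1)
        have : (Z.erase n).card = 0 := by
          rw [Finset.card_erase_of_mem hZ.2, hZcard, ← hk1]
        obtain ⟨i, hi, hiY, hBe⟩ := mem_copacket'.mp hB
        have : i ∈ Z.erase n := hBe ▸ Finset.mem_insert_self i Y
        rw [Finset.card_eq_zero.mp ‹(Z.erase n).card = 0›] at this
        exact absurd this (Finset.notMem_empty i)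
      · -- k ≥ 2
        have hk2' : 2 ≤ k := hk2
        have hYcard' : Y.card = k - 2 := by rw [hYcard]; omega
        have hnY : n ∉ Y := fun h => by
          have := Finset.mem_Icc.mp (hYsub h); omega
        set X := insert n Y with hXdef
        have hXmem : X ∈ ksubsets n (k-1) := by
          refine mem_ksubsets'.mpr ⟨?_, ?_⟩
          · intro x hx
            rcases Finset.mem_insert.mp hx with rfl | h
            · rw [Finset.mem_Icc]; omega
            · have := Finset.mem_Icc.mp (hYsub h)
              rw [Finset.mem_Icc]; omega
          · rw [Finset.card_insert_of_notMem hnY, hYcard']; omega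
        have hnotmem : ∀ A ∈ copacket (n-1) Y, n ∉ A :=
          fun A hA => notMem_of_copacket_pred hn1 hYsub hA
        have hins : ∀ A ∈ copacket (n-1) Y, insert n A ∈ copacket n X := by
          intro A hA
          obtain ⟨i, ⟨hi1, hi2⟩, hiY, rfl⟩ := mem_copacket'.mp hA
          refine mem_copacket'.mpr ⟨i, ⟨hi1, by omega⟩, ?_, ?_⟩
          · intro h
            rcases Finset.mem_insert.mp h with rfl | h
            · omega
            · exact hiY h
          · rw [hXdef, Finset.insert_comm]
        have hmemiff : ∀ A : Finset ℕ, n ∉ A → (A ∈ contr I n ↔ insert n A ∈ I) := by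
          intro A hnA
          constructor
          · intro h
            rw [contr, Finset.mem_image] at h
            obtain ⟨Z, hZ, hZe⟩ := h
            rw [Finset.mem_filter] at hZ
            have : insert n A = Z := by rw [← hZe, Finset.insert_erase hZ.2]
            rw [this]; exact hZ.1
          · intro h
            rw [contr, Finset.mem_image]
            exact ⟨insert n A, Finset.mem_filter.mpr ⟨h, Finset.mem_insert_self n A⟩,
              Finset.erase_insert hnA⟩
        rcases hIcc X hXmem with hpre | hsuf
        · left
          intro A hA B hB hBI hlt
          have hnA := hnotmem A hA
          have hnB := hnotmem B hB
          have hlt' := (lexLt_insert_iff' hnA hnB).mpr hlt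
          exact (hmemiff A hnA).mpr
            (hpre _ (hins A hA) _ (hins B hB) ((hmemiff B hnB).mp hBI) hlt')
        · right
          intro A hA B hB hAI hlt
          have hnA := hnotmem A hA
          have hnB := hnotmem B hB
          have hlt' := (lexLt_insert_iff' hnA hnB).mpr hlt
          exact (hmemiff B hnB).mpr
            (hsuf _ (hins A hA) _ (hins B hB) ((hmemiff A hnA).mp hAI) hlt')
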